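/- arXiv:1405.0976 — 6 statements merged into one kernel-verified Lean document; each statement's English description precedes it below -/
import Mathlib

section
/- Let G be a finite group. (i) For all α, β ∈ Aut(G) one has Δ_α(G) * Δ_β(G) = Δ_{α∘β}(G). (ii) A subgroup L ≤ G×G satisfies L*M = Δ(G) = M*L for some subgroup M ≤ G×G if and only if L = Δ_α(G) for some α ∈ Aut(G). Consequently, the map α ↦ Δ_α(G) is a group isomorphism from Aut(G) onto the group of invertible elements of the monoid of all subgroups of G×G under the star product, whose identity element is Δ(G). -/
/-- The star (Bouc) product of subgroups of direct products:
`L*M := {(g,k) | ∃ h, (g,h) ∈ L ∧ (h,k) ∈ M}`. -/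
def starProd {G H K : Type*} [Group G] [Group H] [Group K]
    (L : Subgroup (G × H)) (M : Subgroup (H × K)) : Subgroup (G × K) where
  carrier := {p | ∃ h : H, (p.1, h) ∈ L ∧ (h, p.2) ∈ M}
  one_mem' := ⟨1, L.one_mem, M.one_mem⟩
  mul_mem' := by
    rintro a b ⟨h1, h1L, h1M⟩ ⟨h2, h2L, h2M⟩
    exact ⟨h1 * h2, L.mul_mem h1L h2L, M.mul_mem h1M h2M⟩
  inv_mem' := by
    rintro a ⟨h, hL, hM⟩
    exact ⟨h⁻¹, L.inv_mem hL, M.inv_mem hM⟩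

/-- `Δ_α(G) = {(α g, g) | g ∈ G}` for an automorphism `α` of `G`. -/
def deltaAut {G : Type*} [Group G] (α : MulAut G) : Subgroup (G × G) where
  carrier := {p | p.1 = α p.2}
  one_mem' := by simp
  mul_mem' := by
    rintro a b (ha : a.1 = α a.2) (hb : b.1 = α b.2)
    show a.1 * b.1 = α (a.2 * b.2)
    rw [map_mul, ha, hb]
  inv_mem' := by
    rintro a (ha : a.1 = α a.2)
    show a.1⁻¹ = α a.2⁻¹
    rw [map_inv, ha]

/-- `Δ(G) = {(g, g) | g ∈ G}`. -/
def deltaSub (G : Type*) [Group G] : Subgroup (G × G) where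
  carrier := {p | p.1 = p.2}
  one_mem' := rfl
  mul_mem' := by
    rintro a b (ha : a.1 = a.2) (hb : b.1 = b.2)
    show a.1 * b.1 = a.2 * b.2
    rw [ha, hb]
  inv_mem' := by
    rintro a (ha : a.1 = a.2)
    show a.1⁻¹ = a.2⁻¹
    rw [ha]

/-!
An invertible `L ≤ G × H` for the star product is the graph of a bijection `H → G`: if
`L * M = Δ(G)` and `M * L = Δ(H)`, then every coordinate of `L` is hit, and two points of `L`
sharing one coordinate are both `*`-linked through `M` to the same diagonal point, so they share
the other one as well. Since `L` is a subgroup, that bijection is an isomorphism.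
-/

section StarProd

variable {G H K : Type*} [Group G] [Group H] [Group K]

@[simp]
lemma mem_starProd {L : Subgroup (G × H)} {M : Subgroup (H × K)} {p : G × K} :
    p ∈ starProd L M ↔ ∃ h, (p.1, h) ∈ L ∧ (h, p.2) ∈ M :=
  Iff.rfl

@[simp]
lemma mem_deltaAut {α : MulAut G} {p : G × G} : p ∈ deltaAut α ↔ p.1 = α p.2 :=
  Iff.rfl

@[simp]
lemma mem_deltaSub {p : G × G} : p ∈ deltaSub G ↔ p.1 = p.2 :=
  Iff.rfl

lemma deltaSub_starProd (L : Subgroup (G × H)) : starProd (deltaSub G) L = L := by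
  ext ⟨g, h⟩
  simp

lemma starProd_deltaSub (L : Subgroup (G × H)) : starProd L (deltaSub H) = L := by
  ext ⟨g, h⟩
  simp

lemma deltaAut_starProd_deltaAut (α β : MulAut G) :
    starProd (deltaAut α) (deltaAut β) = deltaAut (α * β) := by
  ext ⟨g, k⟩
  simp [MulAut.mul_apply]

lemma deltaAut_one : deltaAut (1 : MulAut G) = deltaSub G :=
  rfl

lemma deltaAut_injective : Function.Injective (deltaAut : MulAut G → Subgroup (G × G)) := by
  intro α β h
  ext g
  have : (α g, g) ∈ deltaAut β := h ▸ rfl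
  exact this

end StarProd

section Invertible

variable {G H : Type*} [Group G] [Group H] {L : Subgroup (G × H)} {M : Subgroup (H × G)}

lemma exists_mem_of_starProd_eq_deltaSub (hLM : starProd L M = deltaSub G) (g : G) :
    ∃ h, (g, h) ∈ L ∧ (h, g) ∈ M :=
  (SetLike.ext_iff.mp hLM (g, g)).mpr rfl

lemma fst_eq_of_mem_of_mem (hLM : starProd L M = deltaSub G) (hML : starProd M L = deltaSub H)
    {g g' : G} {h : H} (hg : (g, h) ∈ L) (hg' : (g', h) ∈ L) : g = g' := by
  obtain ⟨k, hk, -⟩ := exists_mem_of_starProd_eq_deltaSub hML h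
  have link : ∀ x, (x, h) ∈ L → x = k := fun x hx =>
    (SetLike.ext_iff.mp hLM (x, k)).mp ⟨h, hx, hk⟩
  rw [link g hg, link g' hg']

lemma snd_eq_of_mem_of_mem (hLM : starProd L M = deltaSub G) (hML : starProd M L = deltaSub H)
    {g : G} {h h' : H} (hh : (g, h) ∈ L) (hh' : (g, h') ∈ L) : h = h' := by
  obtain ⟨k, -, hk⟩ := exists_mem_of_starProd_eq_deltaSub hLM g
  have link : ∀ y, (g, y) ∈ L → k = y := fun y hy =>
    (SetLike.ext_iff.mp hML (k, y)).mp ⟨g, hk, hy⟩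
  rw [← link h hh, ← link h' hh']

lemma exists_mulEquiv_of_starProd_eq_deltaSub (hLM : starProd L M = deltaSub G)
    (hML : starProd M L = deltaSub H) : ∃ e : H ≃* G, ∀ p : G × H, p ∈ L ↔ p.1 = e p.2 := by
  choose f hf using fun h => exists_mem_of_starProd_eq_deltaSub hML h
  have mem_iff : ∀ p : G × H, p ∈ L ↔ p.1 = f p.2 := by
    rintro ⟨g, h⟩
    refine ⟨fun hp => fst_eq_of_mem_of_mem hLM hML hp (hf h).2, fun (hp : g = f h) => ?_⟩
    exact hp ▸ (hf h).2
  have map_mul : ∀ a b, f (a * b) = f a * f b := fun a b =>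
    ((mem_iff _).mp (L.mul_mem ((mem_iff (f a, a)).mpr rfl) ((mem_iff (f b, b)).mpr rfl))).symm
  have bijective : Function.Bijective f := by
    refine ⟨fun a b hab => snd_eq_of_mem_of_mem hLM hML ((mem_iff (f a, a)).mpr rfl)
      ((mem_iff (f a, b)).mpr hab), fun g => ?_⟩
    obtain ⟨h, hgh, -⟩ := exists_mem_of_starProd_eq_deltaSub hLM g
    exact ⟨h, ((mem_iff _).mp hgh).symm⟩
  exact ⟨MulEquiv.ofBijective (MonoidHom.mk' f map_mul) bijective, mem_iff⟩

end Invertible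

theorem statement0_general (G : Type*) [Group G] :
    (∀ α β : MulAut G, starProd (deltaAut α) (deltaAut β) = deltaAut (α * β)) ∧
    (∀ L : Subgroup (G × G),
      (∃ M : Subgroup (G × G), starProd L M = deltaSub G ∧ starProd M L = deltaSub G) ↔
        ∃ α : MulAut G, L = deltaAut α) ∧
    Function.Injective (fun α : MulAut G => deltaAut α) ∧
    (∀ L : Subgroup (G × G), starProd (deltaSub G) L = L ∧ starProd L (deltaSub G) = L) := by
  refine ⟨deltaAut_starProd_deltaAut, fun L => ⟨?_, ?_⟩, deltaAut_injective,
    fun L => ⟨deltaSub_starProd L, starProd_deltaSub L⟩⟩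
  · rintro ⟨M, hLM, hML⟩
    obtain ⟨α, hα⟩ := exists_mulEquiv_of_starProd_eq_deltaSub hLM hML
    exact ⟨α, Subgroup.ext hα⟩
  · rintro ⟨α, rfl⟩
    refine ⟨deltaAut α⁻¹, ?_, ?_⟩
    · rw [deltaAut_starProd_deltaAut, mul_inv_cancel, deltaAut_one]
    · rw [deltaAut_starProd_deltaAut, inv_mul_cancel, deltaAut_one]

/-- (i) `Δ_α(G) * Δ_β(G) = Δ_{α∘β}(G)`;
(ii) `L` is invertible with respect to the star product (with identity `Δ(G)`)
iff `L = Δ_α(G)` for some automorphism `α`;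
consequently (together with injectivity of `α ↦ Δ_α(G)` and the fact that `Δ(G)` is a
two-sided identity for the star product) the map `α ↦ Δ_α(G)` is a group isomorphism
from `Aut(G)` onto the group of invertible elements of the monoid of all subgroups of
`G × G` under the star product, whose identity element is `Δ(G)`. -/
theorem statement0 (G : Type*) [Group G] [Finite G] :
    (∀ α β : MulAut G, starProd (deltaAut α) (deltaAut β) = deltaAut (α * β)) ∧
    (∀ L : Subgroup (G × G),
      (∃ M : Subgroup (G × G), starProd L M = deltaSub G ∧ starProd M L = deltaSub G) ↔
        ∃ α : MulAut G, L = deltaAut α) ∧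
    Function.Injective (fun α : MulAut G => deltaAut α) ∧
    (∀ L : Subgroup (G × G), starProd (deltaSub G) L = L ∧ starProd L (deltaSub G) = L) :=
  statement0_general G
end

section
/- Let G, H, G', H' be finite groups and let L ≤ G×H, M ≤ G'×H' be subgroups. The following are equivalent: (i) there exist subgroups U ≤ G'×G and V ≤ H×H' with U*L*V = M, and subgroups U' ≤ G×G' and V' ≤ H'×H with U'*M*V' = L; (ii) the groups q(L) = p₁(L)/k₁(L) and q(M) = p₁(M)/k₁(M) are isomorphic. (In the category whose morphisms are subgroups of direct products composed via the star product, L and M lie in the same J-class if and only if q(L) ≅ q(M).) -/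
/-- `p₁(L)`, the image of `L ≤ G×H` under the first projection. -/
def proj1 {G H : Type*} [Group G] [Group H] (L : Subgroup (G × H)) : Subgroup G :=
  L.map (MonoidHom.fst G H)

/-- `k₁(L) = {g | (g,1) ∈ L}` for `L ≤ G×H`. -/
def ker1 {G H : Type*} [Group G] [Group H] (L : Subgroup (G × H)) : Subgroup G :=
  L.comap (MonoidHom.inl G H)

/-- `k₁(L)` is a normal subgroup of `p₁(L)`. -/
instance ker1_normal {G H : Type*} [Group G] [Group H] (L : Subgroup (G × H)) :
    ((ker1 L).subgroupOf (proj1 L)).Normal := by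
  constructor
  intro n hn g
  rw [Subgroup.mem_subgroupOf] at hn ⊢
  obtain ⟨x, hxL, hx⟩ := Subgroup.mem_map.mp g.2
  have hn' : ((↑n : G), (1 : H)) ∈ L := hn
  have hmem : x * ((↑n : G), (1 : H)) * x⁻¹ ∈ L :=
    L.mul_mem (L.mul_mem hxL hn') (L.inv_mem hxL)
  have h1 : x.1 = (↑g : G) := hx
  have heq : x * ((↑n : G), (1 : H)) * x⁻¹ = ((↑(g * n * g⁻¹) : G), (1 : H)) := by
    ext
    · simp [h1]
    · simp
  show ((↑(g * n * g⁻¹) : G), (1 : H)) ∈ L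
  rw [← heq]
  exact hmem

/-- `q(L) = p₁(L)/k₁(L)` for `L ≤ G×H`. -/
abbrev qGrp {G H : Type*} [Group G] [Group H] (L : Subgroup (G × H)) :=
  proj1 L ⧸ (ker1 L).subgroupOf (proj1 L)

/-!
If `M = U * L * V`, then `q(M)` is a quotient of a subgroup of `q(U * L)`, and `q(U * L)` is one of
`q(L)`: on the right-hand factor this is seen through the transposes, since `q(L)` is also
`p₂(L)/k₂(L)` (Goursat). So (i) makes `q(L)` and `q(M)` subquotients of each other, which for
finite groups forces `q(L) ≅ q(M)`. Conversely, an isomorphism `e : q(L) ≅ q(M)` lifts to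
`U = {(g', g) | e[g] = [g']}`, and then `M = U * L * (L° * U° * M)`, where `°` is the transpose.
-/

section

def IsSubquotient (B A : Type*) [Group B] [Group A] : Prop :=
  ∃ (S : Subgroup A) (f : S →* B), Function.Surjective f

variable {A B C K : Type*} [Group A] [Group B] [Group C] [Group K]

theorem IsSubquotient.trans (hCB : IsSubquotient C B) (hBA : IsSubquotient B A) :
    IsSubquotient C A := by
  obtain ⟨S, f, hf⟩ := hBA
  obtain ⟨T, g, hg⟩ := hCB
  let f' : T.comap f →* T := (f.comp (T.comap f).subtype).codRestrict T fun x ↦ x.2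
  have hf' : Function.Surjective f' := fun t ↦ by
    obtain ⟨s, hs⟩ := hf t
    exact ⟨⟨s, by simp [hs]⟩, Subtype.ext hs⟩
  let e := (T.comap f).equivMapOfInjective S.subtype S.subtype_injective
  exact ⟨(T.comap f).map S.subtype, (g.comp f').comp e.symm.toMonoidHom,
    (hg.comp hf').comp e.symm.surjective⟩

theorem IsSubquotient.of_ker_le (ψ : K →* A) (φ : K →* B) (hφ : Function.Surjective φ)
    (h : ψ.ker ≤ φ.ker) : IsSubquotient B A := by
  refine ⟨ψ.range, (QuotientGroup.lift ψ.ker φ h).comp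
    (QuotientGroup.quotientKerEquivRange ψ).symm.toMonoidHom, ?_⟩
  have hlift : Function.Surjective (QuotientGroup.lift ψ.ker φ h) := fun b ↦ by
    obtain ⟨k, rfl⟩ := hφ b
    exact ⟨k, rfl⟩
  exact hlift.comp (QuotientGroup.quotientKerEquivRange ψ).symm.surjective

theorem IsSubquotient.nonempty_mulEquiv [Finite A] [Finite B] (hBA : IsSubquotient B A)
    (hAB : IsSubquotient A B) : Nonempty (A ≃* B) := by
  obtain ⟨S, f, hf⟩ := hBA
  obtain ⟨T, g, hg⟩ := hAB
  have hBS : Nat.card B ≤ Nat.card S := Nat.card_le_card_of_surjective f hf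
  have hSA : Nat.card S ≤ Nat.card A := S.card_le_card_group
  have hAB' : Nat.card A ≤ Nat.card B :=
    (Nat.card_le_card_of_surjective g hg).trans T.card_le_card_group
  have hS : S = ⊤ := S.eq_top_of_card_eq (hSA.antisymm (hAB'.trans hBS))
  have hf_bij : Function.Bijective f :=
    (Nat.bijective_iff_surjective_and_card f).mpr ⟨hf, by omega⟩
  exact ⟨((MulEquiv.subgroupCongr hS).trans Subgroup.topEquiv).symm.trans
    (MulEquiv.ofBijective f hf_bij)⟩

end

section

variable {A B C : Type*} [Group A] [Group B] [Group C]

theorem mem_starProd_s2 {X : Subgroup (A × B)} {Y : Subgroup (B × C)} {p : A × C} :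
    p ∈ starProd X Y ↔ ∃ b : B, (p.1, b) ∈ X ∧ (b, p.2) ∈ Y := Iff.rfl

theorem mem_proj1 {L : Subgroup (A × B)} {a : A} : a ∈ proj1 L ↔ ∃ b, (a, b) ∈ L := by
  simp [proj1]

def swapSub (L : Subgroup (A × B)) : Subgroup (B × A) :=
  L.map (MulEquiv.prodComm : A × B ≃* B × A)

theorem mem_swapSub {L : Subgroup (A × B)} {p : B × A} : p ∈ swapSub L ↔ p.swap ∈ L :=
  Subgroup.mem_map_equiv

theorem swapSub_swapSub (L : Subgroup (A × B)) : swapSub (swapSub L) = L := by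
  ext
  simp [mem_swapSub]

theorem swapSub_starProd (X : Subgroup (A × B)) (Y : Subgroup (B × C)) :
    swapSub (starProd X Y) = starProd (swapSub Y) (swapSub X) := by
  ext
  simp only [mem_swapSub, mem_starProd_s2, Prod.fst_swap, Prod.snd_swap, Prod.swap_prod_mk]
  exact exists_congr fun _ ↦ and_comm

def toQGrp (L : Subgroup (A × B)) : L →* qGrp L :=
  (QuotientGroup.mk' _).comp <| ((MonoidHom.fst A B).comp L.subtype).codRestrict (proj1 L)
    fun x ↦ Subgroup.mem_map_of_mem _ x.2

theorem toQGrp_surjective (L : Subgroup (A × B)) : Function.Surjective (toQGrp L) := by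
  intro q
  obtain ⟨⟨a, ha⟩, rfl⟩ := QuotientGroup.mk'_surjective _ q
  obtain ⟨b, hab⟩ := mem_proj1.mp ha
  exact ⟨⟨(a, b), hab⟩, rfl⟩

theorem mem_ker_toQGrp {L : Subgroup (A × B)} {x : L} :
    x ∈ (toQGrp L).ker ↔ ((x : A × B).1, (1 : B)) ∈ L :=
  QuotientGroup.eq_one_iff _

theorem mem_iff_mk_eq_mk {L : Subgroup (A × B)} {a g : A} {b : B} (hgb : (g, b) ∈ L)
    (ha : a ∈ proj1 L) :
    (a, b) ∈ L ↔
      (QuotientGroup.mk ⟨a, ha⟩ : qGrp L) =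
        QuotientGroup.mk ⟨g, mem_proj1.mpr ⟨b, hgb⟩⟩ := by
  rw [QuotientGroup.eq, Subgroup.mem_subgroupOf]
  change _ ↔ (a⁻¹ * g, (1 : B)) ∈ L
  constructor
  · intro hab
    have hmul : ((a, b) : A × B)⁻¹ * (g, b) = (a⁻¹ * g, 1) := by ext <;> simp
    exact hmul ▸ L.mul_mem (L.inv_mem hab) hgb
  · intro hag
    have hmul : ((g, b) : A × B) * (a⁻¹ * g, 1)⁻¹ = (a, b) := by ext <;> simp
    exact hmul ▸ L.mul_mem hgb (L.inv_mem hag)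

theorem isSubquotient_qGrp_swapSub (L : Subgroup (A × B)) :
    IsSubquotient (qGrp (swapSub L)) (qGrp L) := by
  let e : L ≃* swapSub L := (MulEquiv.prodComm : A × B ≃* B × A).subgroupMap L
  refine .of_ker_le (toQGrp L) ((toQGrp (swapSub L)).comp e.toMonoidHom)
    ((toQGrp_surjective _).comp e.surjective) fun x hx ↦ ?_
  have hx' : ((x : A × B).1, (1 : B)) ∈ L := mem_ker_toQGrp.mp hx
  suffices ((1 : A), (x : A × B).2) ∈ L from mem_ker_toQGrp.mpr (mem_swapSub.mpr this)
  have hmul : ((x : A × B).1, (1 : B))⁻¹ * x = ((1 : A), (x : A × B).2) := by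
    ext <;> simp
  exact hmul ▸ L.mul_mem (L.inv_mem hx') x.2

theorem isSubquotient_qGrp_starProd_left (X : Subgroup (A × B)) (Y : Subgroup (B × C)) :
    IsSubquotient (qGrp (starProd X Y)) (qGrp X) := by
  have hle : proj1 (starProd X Y) ≤ proj1 X := fun a ha ↦ by
    obtain ⟨c, b, hb, -⟩ := mem_proj1.mp ha
    exact mem_proj1.mpr ⟨b, hb⟩
  refine .of_ker_le ((QuotientGroup.mk' _).comp (Subgroup.inclusion hle)) (QuotientGroup.mk' _)
    (QuotientGroup.mk'_surjective _) fun a ha ↦ ?_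
  have haX : ((a : A), (1 : B)) ∈ X := (QuotientGroup.eq_one_iff (Subgroup.inclusion hle a)).mp ha
  exact (QuotientGroup.eq_one_iff a).mpr ⟨1, haX, Y.one_mem⟩

end

section

variable {G H G' H' : Type*} [Group G] [Group H] [Group G'] [Group H']
  {L : Subgroup (G × H)} {M : Subgroup (G' × H')}

theorem isSubquotient_qGrp_of_starProd_eq {U : Subgroup (G' × G)} {V : Subgroup (H × H')}
    (hM : starProd (starProd U L) V = M) :
    IsSubquotient (qGrp M) (qGrp L) := by
  have hUL : IsSubquotient (qGrp (starProd U L)) (qGrp L) := by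
    have h := isSubquotient_qGrp_starProd_left (swapSub L) (swapSub U)
    rw [← swapSub_starProd] at h
    have h' := isSubquotient_qGrp_swapSub (swapSub (starProd U L))
    rw [swapSub_swapSub] at h'
    exact h'.trans (h.trans (isSubquotient_qGrp_swapSub L))
  exact hM ▸ (isSubquotient_qGrp_starProd_left _ V).trans hUL

def qGrpGraph (e : qGrp L ≃* qGrp M) : Subgroup (G' × G) :=
  ((e.symm : qGrp M →* qGrp L).graph.comap
    ((QuotientGroup.mk' _).prodMap (QuotientGroup.mk' _))).map
    ((proj1 M).subtype.prodMap (proj1 L).subtype)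

theorem mem_qGrpGraph {e : qGrp L ≃* qGrp M} {g' : G'} {g : G} :
    (g', g) ∈ qGrpGraph e ↔ ∃ (hg : g ∈ proj1 L) (hg' : g' ∈ proj1 M),
      e (QuotientGroup.mk ⟨g, hg⟩) = QuotientGroup.mk ⟨g', hg'⟩ := by
  constructor
  · rintro ⟨⟨⟨a', ha'⟩, ⟨a, ha⟩⟩, hmem, hx⟩
    obtain ⟨rfl, rfl⟩ := Prod.ext_iff.mp hx
    exact ⟨ha, ha', e.eq_symm_apply.mp hmem.symm⟩
  · rintro ⟨hg, hg', he⟩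
    exact ⟨(⟨g', hg'⟩, ⟨g, hg⟩), (e.eq_symm_apply.mpr he).symm, rfl⟩

theorem starProd_qGrpGraph_starProd (e : qGrp L ≃* qGrp M) :
    starProd (starProd (qGrpGraph e) L)
      (starProd (starProd (swapSub L) (swapSub (qGrpGraph e))) M) = M := by
  ext ⟨x', y'⟩
  simp only [mem_starProd_s2, mem_swapSub, Prod.swap_prod_mk]
  constructor
  · rintro ⟨h, ⟨g, hx'g, hgh⟩, a', ⟨a, hah, ha'a⟩, ha'y'⟩
    obtain ⟨hg, hx', hegx'⟩ := mem_qGrpGraph.mp hx'g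
    obtain ⟨ha, ha', hea⟩ := mem_qGrpGraph.mp ha'a
    have hag := (mem_iff_mk_eq_mk hgh ha).mp hah
    refine (mem_iff_mk_eq_mk ha'y' hx').mpr ?_
    rw [← hegx', ← hea, ← hag]
  · intro hx'y'
    have hx' : x' ∈ proj1 M := mem_proj1.mpr ⟨y', hx'y'⟩
    obtain ⟨⟨g, hg⟩, hgx'⟩ :=
      QuotientGroup.mk_surjective (e.symm (QuotientGroup.mk ⟨x', hx'⟩))
    obtain ⟨h, hgh⟩ := mem_proj1.mp hg
    have hx'g : (x', g) ∈ qGrpGraph e := mem_qGrpGraph.mpr ⟨hg, hx', e.eq_symm_apply.mp hgx'⟩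
    exact ⟨h, ⟨g, hx'g, hgh⟩, x', ⟨g, hgh, hx'g⟩, hx'y'⟩

end

theorem statement2_general (G H G' H' : Type*) [Group G] [Group H] [Group G'] [Group H']
    [Finite G] [Finite G']
    (L : Subgroup (G × H)) (M : Subgroup (G' × H')) :
    ((∃ (U : Subgroup (G' × G)) (V : Subgroup (H × H')),
        starProd (starProd U L) V = M) ∧
      (∃ (U' : Subgroup (G × G')) (V' : Subgroup (H' × H)),
        starProd (starProd U' M) V' = L)) ↔
      Nonempty (qGrp L ≃* qGrp M) := by
  constructor
  · rintro ⟨⟨U, V, hM⟩, ⟨U', V', hL⟩⟩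
    exact (isSubquotient_qGrp_of_starProd_eq hM).nonempty_mulEquiv
      (isSubquotient_qGrp_of_starProd_eq hL)
  · rintro ⟨e⟩
    exact ⟨⟨_, _, starProd_qGrpGraph_starProd e⟩,
      ⟨_, _, starProd_qGrpGraph_starProd e.symm⟩⟩

/-- `L ≤ G×H` and `M ≤ G'×H'` lie in the same J-class of the category of finite groups
with subgroups of direct products as morphisms (composed via the star product), i.e.
each of `L` and `M` can be obtained from the other by pre- and post-composition,
if and only if `q(L) ≅ q(M)`. -/
theorem statement2 (G H G' H' : Type*) [Group G] [Group H] [Group G'] [Group H']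
    [Finite G] [Finite H] [Finite G'] [Finite H']
    (L : Subgroup (G × H)) (M : Subgroup (G' × H')) :
    ((∃ (U : Subgroup (G' × G)) (V : Subgroup (H × H')),
        starProd (starProd U L) V = M) ∧
      (∃ (U' : Subgroup (G × G')) (V' : Subgroup (H' × H)),
        starProd (starProd U' M) V' = L)) ↔
      Nonempty (qGrp L ≃* qGrp M) :=
  statement2_general G H G' H' L M
end

section
/- Let G and H be finite groups, let K ⊴ P ≤ G be subgroups, let η : H → P/K be a group isomorphism, and let L := {(g,h) ∈ G×H | g ∈ P and gK = η(h)} ≤ G×H. Then, inside Aut(G)×Aut(H), one has the inclusion of subset products stab(L)·({1}×Inn(H)) ⊆ (Inn(G)×{1})·stab(L); in particular, for every β ∈ Inn(H) there exists α ∈ Inn(G) with (α,β) ∈ stab(L). -/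
open Pointwise

/-- The subgroup `L = {(g,h) ∈ G×H | g ∈ P ∧ gK = η(h)}` of `G × H` attached to
a section `K ⊴ P ≤ G` and an isomorphism `η : H ≃ P/K`. -/
def goursat {G H : Type*} [Group G] [Group H] (P : Subgroup G) (K : Subgroup P)
    [K.Normal] (η : H ≃* P ⧸ K) : Subgroup (G × H) where
  carrier := {p | ∃ hp : p.1 ∈ P, (QuotientGroup.mk (⟨p.1, hp⟩ : P) : P ⧸ K) = η p.2}
  one_mem' := by
    refine ⟨P.one_mem, ?_⟩
    show (QuotientGroup.mk (1 : P) : P ⧸ K) = η 1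
    simp
  mul_mem' := by
    rintro a b ⟨ha, hqa⟩ ⟨hb, hqb⟩
    refine ⟨P.mul_mem ha hb, ?_⟩
    show (QuotientGroup.mk ((⟨a.1, ha⟩ : P) * (⟨b.1, hb⟩ : P)) : P ⧸ K) = η (a.2 * b.2)
    rw [QuotientGroup.mk_mul, hqa, hqb, map_mul]
  inv_mem' := by
    rintro a ⟨ha, hqa⟩
    refine ⟨P.inv_mem ha, ?_⟩
    show (QuotientGroup.mk ((⟨a.1, ha⟩ : P)⁻¹) : P ⧸ K) = η a.2⁻¹
    rw [QuotientGroup.mk_inv, hqa, map_inv]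

/-- The stabilizer of `L ≤ G×H` under the action of `Aut(G) × Aut(H)` on subgroups
of `G × H` given by applying `α × β`. -/
def stabSet {G H : Type*} [Group G] [Group H] (L : Subgroup (G × H)) :
    Set (MulAut G × MulAut H) :=
  {ab | Subgroup.map (MulEquiv.prodCongr ab.1 ab.2).toMonoidHom L = L}

/-
Conjugation by an element `(g, h)` of `L` is the automorphism `(conj g, conj h)` of `G × H`
and it stabilizes `L`. For `L = goursat P K η` every `h : H` occurs as a second coordinate
(take any `g ∈ P` lifting `η h`), so each `β = conj h ∈ Inn(H)` has a partner `α = conj g ∈ Inn(G)`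
with `(α, β) ∈ stab(L)`. The inclusion of subset products then follows because `stab(L)` is
closed under multiplication and `Inn(G)` is normal in `Aut(G)`:
`s · (1, β) = (s₁ α⁻¹ s₁⁻¹, 1) · (s · (α, β))`.
-/

namespace MulAut

variable {G : Type*} [Group G]

theorem mul_conj_mul_inv (σ : MulAut G) (g : G) : σ * conj g * σ⁻¹ = conj (σ g) := by
  ext x
  simp [MulAut.mul_apply, map_mul]

instance normal_range_conj : (conj : G →* MulAut G).range.Normal where
  conj_mem := by
    rintro _ ⟨g, rfl⟩ σ
    exact ⟨σ g, (mul_conj_mul_inv σ g).symm⟩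

end MulAut

theorem mul_subset_prod_one_mul_of_forall_exists {M N : Type*} [Group M] [Group N]
    {S : Set (M × N)} (hS : ∀ a ∈ S, ∀ b ∈ S, a * b ∈ S) (A : Subgroup M) [A.Normal]
    {B : Set N} (hB : ∀ β ∈ B, ∃ α ∈ A, (α, β) ∈ S) :
    S * ({1} ×ˢ B) ⊆ ((A : Set M) ×ˢ {1}) * S := by
  rintro _ ⟨s, hs, ⟨_, β⟩, ⟨rfl, hβ⟩, rfl⟩
  obtain ⟨α, hα, hαβ⟩ := hB β hβ
  refine ⟨(s.1 * α⁻¹ * s.1⁻¹, 1), ⟨?_, rfl⟩, s * (α, β), hS _ hs _ hαβ, ?_⟩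
  · exact Subgroup.Normal.conj_mem ‹_› _ (inv_mem hα) _
  · ext <;> simp

section stabSet

variable {G H : Type*} [Group G] [Group H]

theorem mul_mem_stabSet {L : Subgroup (G × H)} {a b : MulAut G × MulAut H}
    (ha : a ∈ stabSet L) (hb : b ∈ stabSet L) : a * b ∈ stabSet L := by
  have hcomp : (MulEquiv.prodCongr (a * b).1 (a * b).2).toMonoidHom =
      (MulEquiv.prodCongr a.1 a.2).toMonoidHom.comp (MulEquiv.prodCongr b.1 b.2).toMonoidHom := by
    ext <;> rfl
  show L.map _ = L
  rw [hcomp, ← Subgroup.map_map, hb, ha]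

theorem conj_mem_stabSet {L : Subgroup (G × H)} {x : G × H} (hx : x ∈ L) :
    (MulAut.conj x.1, MulAut.conj x.2) ∈ stabSet L := by
  have hconj : (MulEquiv.prodCongr (MulAut.conj x.1) (MulAut.conj x.2)).toMonoidHom =
      (MulAut.conj x).toMonoidHom := by
    ext <;> rfl
  show L.map _ = L
  rw [hconj]
  exact (Subgroup.mem_normalizer_iff_map_conj_eq).mp (Subgroup.le_normalizer hx)

theorem exists_conj_mem_stabSet {L : Subgroup (G × H)} (hL : ∀ h : H, ∃ g : G, (g, h) ∈ L) :
    ∀ β ∈ (MulAut.conj : H →* MulAut H).range,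
      ∃ α ∈ (MulAut.conj : G →* MulAut G).range, (α, β) ∈ stabSet L := by
  rintro _ ⟨h, rfl⟩
  obtain ⟨g, hg⟩ := hL h
  exact ⟨MulAut.conj g, ⟨g, rfl⟩, conj_mem_stabSet hg⟩

end stabSet

theorem exists_mem_goursat {G H : Type*} [Group G] [Group H] (P : Subgroup G)
    (K : Subgroup P) [K.Normal] (η : H ≃* P ⧸ K) (h : H) : ∃ g : G, (g, h) ∈ goursat P K η := by
  obtain ⟨g, hg⟩ := QuotientGroup.mk_surjective (η h)
  exact ⟨g, g.2, hg⟩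

theorem statement3_general (G H : Type*) [Group G] [Group H]
    (P : Subgroup G) (K : Subgroup P) [K.Normal] (η : H ≃* P ⧸ K) :
    (stabSet (goursat P K η) *
        (({1} : Set (MulAut G)) ×ˢ (((MulAut.conj : H →* MulAut H).range : Subgroup (MulAut H)) :
          Set (MulAut H))) ⊆
      ((((MulAut.conj : G →* MulAut G).range : Subgroup (MulAut G)) : Set (MulAut G)) ×ˢ
          ({1} : Set (MulAut H))) * stabSet (goursat P K η)) ∧
    ∀ β ∈ (MulAut.conj : H →* MulAut H).range,
      ∃ α ∈ (MulAut.conj : G →* MulAut G).range, (α, β) ∈ stabSet (goursat P K η) := by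
  have hpartner := exists_conj_mem_stabSet (exists_mem_goursat P K η)
  exact ⟨mul_subset_prod_one_mul_of_forall_exists (fun _ ha _ hb => mul_mem_stabSet ha hb) _
    hpartner, hpartner⟩

/-- For the subgroup `L = {(g,h) | g ∈ P, gK = η(h)}` one has, inside
`Aut(G) × Aut(H)`, the inclusion of subset products
`stab(L)·({1} × Inn(H)) ⊆ (Inn(G) × {1})·stab(L)`; in particular, for every
`β ∈ Inn(H)` there exists `α ∈ Inn(G)` with `(α,β) ∈ stab(L)`. -/
theorem statement3 (G H : Type*) [Group G] [Group H] [Finite G] [Finite H]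
    (P : Subgroup G) (K : Subgroup P) [K.Normal] (η : H ≃* P ⧸ K) :
    (stabSet (goursat P K η) *
        (({1} : Set (MulAut G)) ×ˢ (((MulAut.conj : H →* MulAut H).range : Subgroup (MulAut H)) :
          Set (MulAut H))) ⊆
      ((((MulAut.conj : G →* MulAut G).range : Subgroup (MulAut G)) : Set (MulAut G)) ×ˢ
          ({1} : Set (MulAut H))) * stabSet (goursat P K η)) ∧
    ∀ β ∈ (MulAut.conj : H →* MulAut H).range,
      ∃ α ∈ (MulAut.conj : G →* MulAut G).range, (α, β) ∈ stabSet (goursat P K η) :=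
  statement3_general G H P K η
end

section
/- Let G, H, K, J be finite groups and let L ≤ G×H, M ≤ H×K, N ≤ K×J be subgroups. Then |k₂(L*M) ∩ k₁(N)| · |k₂(L) ∩ k₁(M)| = |k₂(L) ∩ k₁(M*N)| · |k₂(M) ∩ k₁(N)|, where the first and last intersections are taken inside K and the middle two inside H. (This identity expresses that κ(L,M) := |k₂(L) ∩ k₁(M)|/|H| is a 2-cocycle of the category of finite groups with subgroups of direct products as morphisms.) -/
/-- `k₂(L) = {h | (1,h) ∈ L}` for `L ≤ G×H`. -/
def ker2 {G H : Type*} [Group G] [Group H] (L : Subgroup (G × H)) : Subgroup H :=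
  L.comap (MonoidHom.inr G H)

open Subgroup

theorem Subgroup.card_eq_card_map_mul_card_comap {A B C : Type*} [Group A] [Group B] [Group C]
    (P : Subgroup A) {i : C →* A} (hi : Function.Injective i) {f : A →* B}
    (hexact : i.range = f.ker) :
    Nat.card P = Nat.card (P.map f) * Nat.card (P.comap i) := by
  set g : P →* B := f.comp P.subtype
  have hrange : g.range = P.map f := by rw [MonoidHom.range_comp, range_subtype]
  have hker : Nat.card g.ker = Nat.card (P.comap i) := calc
    Nat.card g.ker = Nat.card (f.ker.subgroupOf P) := by rw [← MonoidHom.comap_ker]; rfl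
    _ = Nat.card ((P.comap i).map i) := by
      rw [← card_subtype P, subgroupOf_map_subtype, map_comap_eq, hexact, inf_comm]
    _ = Nat.card (P.comap i) := card_map_of_injective hi
  rw [← card_mul_index g.ker, index_ker, hrange, hker, mul_comm]

section Product

variable {G H : Type*} [Group G] [Group H]

theorem card_eq_card_map_snd_mul_card_ker1 (P : Subgroup (G × H)) :
    Nat.card P = Nat.card (P.map (MonoidHom.snd G H)) * Nat.card (ker1 P) :=
  P.card_eq_card_map_mul_card_comap (fun _ _ h => congrArg Prod.fst h)
    (by ext ⟨a, b⟩; simp [eq_comm, mem_prod])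

theorem card_eq_card_map_fst_mul_card_ker2 (P : Subgroup (G × H)) :
    Nat.card P = Nat.card (P.map (MonoidHom.fst G H)) * Nat.card (ker2 P) :=
  P.card_eq_card_map_mul_card_comap (fun _ _ h => congrArg Prod.snd h)
    (by ext ⟨a, b⟩; simp [eq_comm, mem_prod])

end Product

section Cocycle

variable {G H K J : Type*} [Group G] [Group H] [Group K] [Group J]
  (L : Subgroup (G × H)) (M : Subgroup (H × K)) (N : Subgroup (K × J))

def cocycleSubgroup : Subgroup (H × K) := M ⊓ (ker2 L).prod (ker1 N)

theorem map_snd_cocycleSubgroup :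
    (cocycleSubgroup L M N).map (MonoidHom.snd H K) = ker2 (starProd L M) ⊓ ker1 N := by
  ext k
  constructor
  · rintro ⟨⟨h, k⟩, ⟨hM, hL, hN⟩, rfl⟩
    exact ⟨⟨h, hL, hM⟩, hN⟩
  · rintro ⟨⟨h, hL, hM⟩, hN⟩
    exact ⟨(h, k), ⟨hM, hL, hN⟩, rfl⟩

theorem ker1_cocycleSubgroup : ker1 (cocycleSubgroup L M N) = ker2 L ⊓ ker1 M := by
  ext h
  exact ⟨fun ⟨hM, hL, _⟩ => ⟨hL, hM⟩, fun ⟨hL, hM⟩ => ⟨hM, hL, N.one_mem⟩⟩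

theorem map_fst_cocycleSubgroup :
    (cocycleSubgroup L M N).map (MonoidHom.fst H K) = ker2 L ⊓ ker1 (starProd M N) := by
  ext h
  constructor
  · rintro ⟨⟨h, k⟩, ⟨hM, hL, hN⟩, rfl⟩
    exact ⟨hL, k, hM, hN⟩
  · rintro ⟨hL, k, hM, hN⟩
    exact ⟨(h, k), ⟨hM, hL, hN⟩, rfl⟩

theorem ker2_cocycleSubgroup : ker2 (cocycleSubgroup L M N) = ker2 M ⊓ ker1 N := by
  ext k
  exact ⟨fun ⟨hM, _, hN⟩ => ⟨hM, hN⟩, fun ⟨hM, hN⟩ => ⟨hM, L.one_mem, hN⟩⟩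

end Cocycle

theorem statement9_general (G H K J : Type*) [Group G] [Group H] [Group K] [Group J]
    (L : Subgroup (G × H)) (M : Subgroup (H × K)) (N : Subgroup (K × J)) :
    Nat.card ↥(ker2 (starProd L M) ⊓ ker1 N) * Nat.card ↥(ker2 L ⊓ ker1 M) =
      Nat.card ↥(ker2 L ⊓ ker1 (starProd M N)) * Nat.card ↥(ker2 M ⊓ ker1 N) := by
  rw [← map_snd_cocycleSubgroup L M N, ← ker1_cocycleSubgroup L M N,
    ← map_fst_cocycleSubgroup L M N, ← ker2_cocycleSubgroup L M N,
    ← card_eq_card_map_snd_mul_card_ker1, ← card_eq_card_map_fst_mul_card_ker2]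

/-- For subgroups `L ≤ G×H`, `M ≤ H×K`, `N ≤ K×J` of direct products of finite groups,
`|k₂(L*M) ∩ k₁(N)| · |k₂(L) ∩ k₁(M)| = |k₂(L) ∩ k₁(M*N)| · |k₂(M) ∩ k₁(N)|`.
This identity expresses that `κ(L,M) := |k₂(L) ∩ k₁(M)|/|H|` is a 2-cocycle of the
category of finite groups with subgroups of direct products as morphisms. -/
theorem statement9 (G H K J : Type*) [Group G] [Group H] [Group K] [Group J]
    [Finite G] [Finite H] [Finite K] [Finite J]
    (L : Subgroup (G × H)) (M : Subgroup (H × K)) (N : Subgroup (K × J)) :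
    Nat.card ↥(ker2 (starProd L M) ⊓ ker1 N) * Nat.card ↥(ker2 L ⊓ ker1 M) =
      Nat.card ↥(ker2 L ⊓ ker1 (starProd M N)) * Nat.card ↥(ker2 M ⊓ ker1 N) :=
  statement9_general G H K J L M N
end

section
/- Let Y and Z be finite groups, N ⊴ Y a normal subgroup, and U ≤ Y×Z a subgroup, so that the set product (N×{1})·U is a subgroup of Y×Z. Let χ : Y → ℂ be a function satisfying χ(n·y) = χ(y) for all n ∈ N and y ∈ Y, and let ψ : Z → ℂ be any function. Then Σ_{w ∈ (N×{1})·U} χ(w₁)·ψ(w₂) = (|N| / |(N×{1}) ∩ U|) · Σ_{u ∈ U} χ(u₁)·ψ(u₂), where w₁, w₂ denote the two components of w ∈ Y×Z. In particular, the left-hand sum is nonzero if and only if Σ_{u ∈ U} χ(u₁)·ψ(u₂) is nonzero. -/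
/-!
Since `χ(w₁)ψ(w₂)` is invariant under left multiplication by `K = N × 1`, summing it over
`K × U` along `(k, u) ↦ k u` gives `|K| · Σ_U`. On the other hand, this map is onto `K U` and each
fibre is a coset of `K ∩ U` (the fibre over `k₀u₀` is `{(k₀a⁻¹, a u₀) | a ∈ K ∩ U}`), so the same sum
is `|K ∩ U| · Σ_{K U}`.
-/

open Pointwise Finset

namespace Subgroup

variable {G : Type*} [Group G] (K U : Subgroup G)

theorem card_mul_fiber_eq_card_inf {k₀ u₀ : G} (hk₀ : k₀ ∈ K) (hu₀ : u₀ ∈ U) :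
    Nat.card {p : K × U | (p.1 : G) * p.2 = k₀ * u₀} = Nat.card ↥(K ⊓ U) := by
  refine Nat.card_congr
    { toFun := fun p => ⟨p.1.2 * u₀⁻¹, mem_inf.mpr ⟨?_, mul_mem p.1.2.2 (inv_mem hu₀)⟩⟩
      invFun := fun a => ⟨(⟨k₀ * a⁻¹, mul_mem hk₀ (inv_mem (mem_inf.mp a.2).1)⟩,
        ⟨a * u₀, mul_mem (mem_inf.mp a.2).2 hu₀⟩), by simp⟩
      left_inv := fun p => ?_
      right_inv := fun a => by simp }
  · rw [show (p.1.2 : G) * u₀⁻¹ = (p.1.1 : G)⁻¹ * k₀ by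
      rw [eq_inv_mul_iff_mul_eq, ← mul_assoc, p.2, mul_inv_cancel_right]]
    exact mul_mem (inv_mem p.1.1.2) hk₀
  · obtain ⟨⟨k, u⟩, hp⟩ := p
    ext <;> simp [← mul_assoc, ← show (k : G) * u = k₀ * u₀ from hp]

theorem card_inf_nsmul_finsum_mul_eq {M : Type*} [AddCommMonoid M] [Finite K] [Finite U]
    (f : G → M) (hf : ∀ k ∈ K, ∀ g, f (k * g) = f g) :
    Nat.card ↥(K ⊓ U) • ∑ᶠ w ∈ (K : Set G) * U, f w = Nat.card K • ∑ᶠ u ∈ (U : Set G), f u := by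
  classical
  have := Fintype.ofFinite K
  have := Fintype.ofFinite U
  set m : K × U → G := fun p => p.1 * p.2
  have hKU : (K : Set G) * U = (univ.image m : Finset G) := by
    ext w
    simp [m, Set.mem_mul]
  have hfiber : ∀ w ∈ univ.image m, #{p | m p = w} = Nat.card ↥(K ⊓ U) := by
    simp only [mem_image, mem_univ, true_and, forall_exists_index]
    rintro w ⟨k, u⟩ rfl
    rw [← card_mul_fiber_eq_card_inf K U k.2 u.2, Nat.card_eq_card_toFinset, Set.toFinset_ofPred]
  calc Nat.card ↥(K ⊓ U) • ∑ᶠ w ∈ (K : Set G) * U, f w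
      = ∑ p : K × U, f (m p) := by
        rw [hKU, finsum_mem_coe_finset, smul_sum, sum_comp f m]
        exact sum_congr rfl fun w hw => by rw [hfiber w hw]
    _ = Nat.card K • ∑ u : U, f u := by
        simp only [m, Fintype.sum_prod_type, hf _ (SetLike.coe_mem _), sum_const,
          card_univ, Nat.card_eq_fintype_card]
    _ = Nat.card K • ∑ᶠ u ∈ (U : Set G), f u := by
        rw [← finsum_set_coe_eq_finsum_mem, finsum_eq_sum_of_fintype]
        rfl

end Subgroup

theorem statement12_general (Y Z : Type*) [Group Y] [Group Z] [Finite Y] [Finite Z]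
    (N : Subgroup Y) (U : Subgroup (Y × Z))
    (χ : Y → ℂ) (hχ : ∀ n ∈ N, ∀ y : Y, χ (n * y) = χ y) (ψ : Z → ℂ) :
    ((∑ᶠ w ∈ ((N.prod (⊥ : Subgroup Z) : Subgroup (Y × Z)) : Set (Y × Z)) *
          (U : Set (Y × Z)), χ w.1 * ψ w.2) =
        ((Nat.card N : ℂ) / (Nat.card ↥(N.prod (⊥ : Subgroup Z) ⊓ U) : ℂ)) *
          ∑ᶠ u ∈ (U : Set (Y × Z)), χ u.1 * ψ u.2) ∧
    ((∑ᶠ w ∈ ((N.prod (⊥ : Subgroup Z) : Subgroup (Y × Z)) : Set (Y × Z)) *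
          (U : Set (Y × Z)), χ w.1 * ψ w.2) ≠ 0 ↔
        (∑ᶠ u ∈ (U : Set (Y × Z)), χ u.1 * ψ u.2) ≠ 0) := by
  set K := N.prod (⊥ : Subgroup Z)
  have hf : ∀ k ∈ K, ∀ w : Y × Z, χ (k * w).1 * ψ (k * w).2 = χ w.1 * ψ w.2 := by
    rintro ⟨n, z⟩ hk w
    obtain ⟨hn, rfl : z = 1⟩ := Subgroup.mem_prod.mp hk
    simp [hχ n hn]
  have hcardK : Nat.card K = Nat.card N := by
    rw [Nat.card_congr (Subgroup.prodEquiv N ⊥).toEquiv, Nat.card_prod, Subgroup.card_bot,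
      mul_one]
  have hcount := Subgroup.card_inf_nsmul_finsum_mul_eq K U (fun w => χ w.1 * ψ w.2) hf
  rw [hcardK, nsmul_eq_mul, nsmul_eq_mul] at hcount
  have hKU : (Nat.card ↥(K ⊓ U) : ℂ) ≠ 0 := Nat.cast_ne_zero.mpr Nat.card_pos.ne'
  have hNcard : (Nat.card N : ℂ) ≠ 0 := Nat.cast_ne_zero.mpr Nat.card_pos.ne'
  have hsum : ∑ᶠ w ∈ (K : Set (Y × Z)) * U, χ w.1 * ψ w.2
      = (Nat.card N : ℂ) / Nat.card ↥(K ⊓ U) * ∑ᶠ u ∈ (U : Set (Y × Z)), χ u.1 * ψ u.2 := by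
    rw [div_mul_eq_mul_div, eq_div_iff hKU, mul_comm, hcount]
  exact ⟨hsum, by rw [hsum, mul_ne_zero_iff, and_iff_right (div_ne_zero hNcard hKU)]⟩

/-- Let `Y`, `Z` be finite groups, `N ⊴ Y`, `U ≤ Y×Z`, and consider the subgroup
`(N×{1})·U` of `Y×Z` (a set product). Let `χ : Y → ℂ` satisfy `χ(n·y) = χ(y)` for all
`n ∈ N`, `y ∈ Y`, and let `ψ : Z → ℂ` be any function. Then
`Σ_{w ∈ (N×{1})·U} χ(w₁)·ψ(w₂) = (|N| / |(N×{1}) ∩ U|) · Σ_{u ∈ U} χ(u₁)·ψ(u₂)`.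
In particular, the left-hand sum is nonzero iff `Σ_{u ∈ U} χ(u₁)·ψ(u₂)` is nonzero. -/
theorem statement12 (Y Z : Type*) [Group Y] [Group Z] [Finite Y] [Finite Z]
    (N : Subgroup Y) (hN : N.Normal) (U : Subgroup (Y × Z))
    (χ : Y → ℂ) (hχ : ∀ n ∈ N, ∀ y : Y, χ (n * y) = χ y) (ψ : Z → ℂ) :
    ((∑ᶠ w ∈ ((N.prod (⊥ : Subgroup Z) : Subgroup (Y × Z)) : Set (Y × Z)) *
          (U : Set (Y × Z)), χ w.1 * ψ w.2) =
        ((Nat.card N : ℂ) / (Nat.card ↥(N.prod (⊥ : Subgroup Z) ⊓ U) : ℂ)) *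
          ∑ᶠ u ∈ (U : Set (Y × Z)), χ u.1 * ψ u.2) ∧
    ((∑ᶠ w ∈ ((N.prod (⊥ : Subgroup Z) : Subgroup (Y × Z)) : Set (Y × Z)) *
          (U : Set (Y × Z)), χ w.1 * ψ w.2) ≠ 0 ↔
        (∑ᶠ u ∈ (U : Set (Y × Z)), χ u.1 * ψ u.2) ≠ 0) :=
  statement12_general Y Z N U χ hχ ψ
end

section
/- Let Z be a finite group, M ⊴ Z a normal subgroup, and W an irreducible complex representation of Z with character χ_W. If not every element of M acts as the identity on W, then Σ_{m ∈ M} χ_W(z·m) = 0 for every z ∈ Z. -/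
/-!
For a normal subgroup `M`, the operator `P = ∑_{m ∈ M} ρ m` commutes with the whole of `Z`, so by
Schur's lemma it is a scalar `c`. Since `ρ m * P = P` for `m ∈ M`, a nonzero `c` would force every
`m ∈ M` to act trivially. Hence `P = 0`, and `∑_{m ∈ M} χ(z m) = tr (ρ z * P) = 0`.
-/

open CategoryTheory

namespace Representation

section CommSemiring

variable {k G V : Type*} [CommSemiring k] [Group G] [AddCommMonoid V] [Module k V]

def subgroupSum (ρ : Representation k G V) (M : Subgroup G) [Fintype M] : V →ₗ[k] V :=
  ∑ m : M, ρ m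

variable (ρ : Representation k G V) {M : Subgroup G} [Fintype M]

theorem mul_subgroupSum_of_mem {m : G} (hm : m ∈ M) :
    ρ m * ρ.subgroupSum M = ρ.subgroupSum M := by
  rw [subgroupSum, Finset.mul_sum]
  exact Fintype.sum_equiv (Equiv.mulLeft (⟨m, hm⟩ : M)) _ _ fun n => (map_mul ρ m n).symm

theorem subgroupSum_commute (hM : M.Normal) (g : G) : Commute (ρ g) (ρ.subgroupSum M) := by
  let conj : M ≃ M := (MulAut.conjNormal g).toEquiv
  rw [Commute, SemiconjBy, subgroupSum, Finset.mul_sum, Finset.sum_mul]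
  refine Fintype.sum_equiv conj _ _ fun m => ?_
  simp [conj, ← map_mul]

end CommSemiring

theorem subgroupSum_eq_zero_of_eq_smul_one {k G V : Type*} [Field k] [Group G] [AddCommGroup V]
    [Module k V] (ρ : Representation k G V) {M : Subgroup G} [Fintype M] {c : k}
    (hc : ρ.subgroupSum M = c • 1) (h : ¬ ∀ m ∈ M, ρ m = 1) : ρ.subgroupSum M = 0 := by
  suffices c = 0 by rw [hc, this, zero_smul]
  by_contra hc0
  refine h fun m hm => smul_right_injective _ hc0 ?_
  simpa only [hc, mul_smul_comm, mul_one] using ρ.mul_subgroupSum_of_mem hm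

end Representation

namespace FDRep

variable {k G : Type*} [Field k]

theorem exists_eq_smul_one_of_commute [IsAlgClosed k] [Monoid G] (W : FDRep k G) [Simple W]
    (f : W →ₗ[k] W) (hf : ∀ g, Commute (W.ρ g) f) : ∃ c : k, f = c • 1 := by
  let φ : W ⟶ W := ⟨ConcreteCategory.ofHom f, fun g => by
    ext v; exact congrArg (fun f => f v) (hf g).symm⟩
  obtain ⟨c, hc⟩ := endomorphism_simple_eq_smul_id k φ
  exact ⟨c, (congrArg (fun f => f.hom.hom.hom) hc).symm⟩

theorem sum_character_mul_eq_trace [Group G] (W : FDRep k G) (M : Subgroup G) [Fintype M]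
    (z : G) :
    ∑ m : M, W.character (z * m) =
      LinearMap.trace k W (W.ρ z * Representation.subgroupSum W.ρ M) := by
  simp only [Representation.subgroupSum, Finset.mul_sum, map_sum, ← map_mul]
  rfl

end FDRep

/-- Let `Z` be a finite group, `M ⊴ Z` a normal subgroup, and `W` an irreducible
complex representation of `Z` with character `χ_W`. If not every element of `M` acts
as the identity on `W`, then `Σ_{m ∈ M} χ_W(z·m) = 0` for every `z ∈ Z`. -/
theorem statement13 (Z : Type) [Group Z] [Finite Z] (M : Subgroup Z) (hM : M.Normal)
    (W : FDRep ℂ Z) [Simple W]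
    (h : ¬ ∀ m ∈ M, W.ρ m = 1) :
    ∀ z : Z, (∑ᶠ m ∈ (M : Set Z), W.character (z * m)) = 0 := by
  intro z
  have := Fintype.ofFinite M
  obtain ⟨c, hc⟩ :=
    W.exists_eq_smul_one_of_commute _ (Representation.subgroupSum_commute W.ρ hM)
  have hP : Representation.subgroupSum W.ρ M = 0 :=
    Representation.subgroupSum_eq_zero_of_eq_smul_one W.ρ hc h
  calc ∑ᶠ m ∈ (M : Set Z), W.character (z * m)
      = ∑ m : M, W.character (z * m) := by
        rw [← finsum_set_coe_eq_finsum_mem, finsum_eq_sum_of_fintype]; rfl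
    _ = 0 := by rw [W.sum_character_mul_eq_trace, hP, mul_zero, map_zero]
end
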